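/- arXiv:1009.6023 — 3 statements merged into one kernel-verified Lean document; each statement's English description precedes it below -/
import Mathlib

section
/- Fix integers $D \geq 2$, $d \geq 1$, and nonnegative integers $d_1,\ldots,d_{D-1}$ with $\sum_j d_j \leq d-1$. Define $s_i = \lfloor i/D - \sum_{j=1}^{D-1}\{ij/D\} d_j \rfloor + d$ for $i = 1,\ldots,D-1$. Then $s_i + s_{D-i} = d+1$ for all $i = 1,\ldots,D-1$ if and only if the following three conditions all hold: (1) $\sum_{j=1}^{D-1} j d_j - 1$ is coprime to $D$; (2) $d_j = 0$ for every $j$ not coprime to $D$; (3) $\sum_{j=1}^{D-1} d_j = d-1$. -/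
namespace Stmt6Aux

def AA (D : ℕ) (dj : ℕ → ℕ) (i : ℕ) : ℤ :=
  (i:ℤ) - ∑ j ∈ Finset.Icc 1 (D-1), ((i:ℤ)*j % D) * dj j

def E (D : ℕ) (dj : ℕ → ℕ) (i : ℕ) : ℤ :=
  ∑ j ∈ Finset.Icc 1 (D-1), if (D:ℤ) ∣ (i:ℤ)*j then 0 else (dj j:ℤ)

lemma floor_eq (D : ℕ) (dj : ℕ → ℕ) (i : ℕ) :
    ⌊(i : ℚ) / D - ∑ j ∈ Finset.Icc 1 (D - 1),
        Int.fract ((i * j : ℚ) / D) * (dj j : ℚ)⌋ = AA D dj i / D := by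
  have h1 : (i : ℚ) / D - ∑ j ∈ Finset.Icc 1 (D - 1),
      Int.fract ((i * j : ℚ) / D) * (dj j : ℚ) = ((AA D dj i : ℤ) : ℚ) / (D : ℕ) := by
    unfold AA
    push_cast
    rw [sub_div, Finset.sum_div]
    congr 1
    refine Finset.sum_congr rfl fun j hj => ?_
    have h2 : ((i:ℚ) * j) / D = (((i:ℤ)*(j:ℤ) : ℤ) : ℚ) / ((D:ℕ) : ℚ) := by push_cast; ring
    rw [h2, Int.fract_div_intCast_eq_div_intCast_mod]
    push_cast
    ring
  rw [h1, Rat.floor_intCast_div_natCast]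

lemma addneg (D : ℕ) (hD : 0 < D) (a : ℤ) :
    a % D + (-a) % D = if (D:ℤ) ∣ a then 0 else (D:ℤ) := by
  have hD0 : (0:ℤ) < D := by exact_mod_cast hD
  have h1 := Int.emod_nonneg a (ne_of_gt hD0)
  have h2 := Int.emod_lt_of_pos a hD0
  have h3 := Int.emod_nonneg (-a) (ne_of_gt hD0)
  have h4 := Int.emod_lt_of_pos (-a) hD0
  have h5 : (D:ℤ) ∣ a % D + (-a) % D := by
    apply Int.dvd_of_emod_eq_zero
    rw [← Int.add_emod]
    simp
  by_cases hdvd : (D:ℤ) ∣ a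
  · rw [if_pos hdvd, Int.emod_eq_zero_of_dvd hdvd,
      Int.emod_eq_zero_of_dvd ((dvd_neg).mpr hdvd)]
    norm_num
  · rw [if_neg hdvd]
    have ha : a % D ≠ 0 := fun h => hdvd (Int.dvd_of_emod_eq_zero h)
    obtain ⟨k, hk⟩ := h5
    have hpos : 0 < a % D := lt_of_le_of_ne h1 (Ne.symm ha)
    have hk0 : 0 < k := by
      by_contra h; push_neg at h
      nlinarith [mul_le_mul_of_nonneg_left h (le_of_lt hD0)]
    have hk2 : k < 2 := by
      by_contra h; push_neg at h
      nlinarith [mul_le_mul_of_nonneg_left h (le_of_lt hD0)]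
    have : k = 1 := by omega
    rw [hk, this, mul_one]

lemma addA (D : ℕ) (hD : 2 ≤ D) (dj : ℕ → ℕ) (i : ℕ) (hi : i ∈ Finset.Icc 1 (D-1)) :
    AA D dj i + AA D dj (D - i) = D * (1 - E D dj i) := by
  rw [Finset.mem_Icc] at hi
  have hiD : ((D - i : ℕ) : ℤ) = (D:ℤ) - i := by omega
  unfold AA E
  rw [hiD]
  have hper : ∀ j ∈ Finset.Icc 1 (D-1),
      ((i:ℤ)*j % D) * dj j + (((D:ℤ) - i)*j % D) * dj j
        = (if (D:ℤ) ∣ (i:ℤ)*j then 0 else (D:ℤ)) * dj j := by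
    intro j hj
    have h1 : ((D:ℤ) - i)*j % D = (-((i:ℤ)*j)) % D := by
      have : ((D:ℤ) - i)*j = -((i:ℤ)*j) + (D:ℤ)*j := by ring
      rw [this, Int.add_mul_emod_self_left]
    rw [h1, ← add_mul, addneg D (by omega)]
  have hsum : ∑ j ∈ Finset.Icc 1 (D-1), (((i:ℤ)*j % D) * dj j + (((D:ℤ) - i)*j % D) * dj j)
      = ∑ j ∈ Finset.Icc 1 (D-1), (if (D:ℤ) ∣ (i:ℤ)*j then 0 else (D:ℤ)) * dj j :=
    Finset.sum_congr rfl hper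
  rw [Finset.sum_add_distrib] at hsum
  have hrhs : ∑ j ∈ Finset.Icc 1 (D-1), (if (D:ℤ) ∣ (i:ℤ)*j then 0 else (D:ℤ)) * dj j
      = (D:ℤ) * ∑ j ∈ Finset.Icc 1 (D-1), (if (D:ℤ) ∣ (i:ℤ)*j then 0 else (dj j : ℤ)) := by
    rw [Finset.mul_sum]
    refine Finset.sum_congr rfl fun j hj => ?_
    split_ifs <;> ring
  rw [hrhs] at hsum
  linarith [hsum]

lemma modA (D : ℕ) (dj : ℕ → ℕ) (i : ℕ) :
    AA D dj i % D = ((i:ℤ) * (1 - ∑ j ∈ Finset.Icc 1 (D-1), (j:ℤ) * dj j)) % D := by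
  have hT : (i:ℤ) * ∑ j ∈ Finset.Icc 1 (D-1), (j:ℤ) * dj j
      = ∑ j ∈ Finset.Icc 1 (D-1), (i:ℤ)*j * dj j := by
    rw [Finset.mul_sum]
    exact Finset.sum_congr rfl fun j _ => by ring
  have h2 : ∑ j ∈ Finset.Icc 1 (D-1), ((i:ℤ)*j % D - (i:ℤ)*j) * dj j
      = ∑ j ∈ Finset.Icc 1 (D-1), ((i:ℤ)*j % D) * dj j
        - ∑ j ∈ Finset.Icc 1 (D-1), (i:ℤ)*j * dj j := by
    rw [← Finset.sum_sub_distrib]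
    exact Finset.sum_congr rfl fun j _ => by ring
  have hdvd : (D:ℤ) ∣ ((i:ℤ) * (1 - ∑ j ∈ Finset.Icc 1 (D-1), (j:ℤ) * dj j)) - AA D dj i := by
    have h1 : ((i:ℤ) * (1 - ∑ j ∈ Finset.Icc 1 (D-1), (j:ℤ) * dj j)) - AA D dj i
        = ∑ j ∈ Finset.Icc 1 (D-1), ((i:ℤ)*j % D - (i:ℤ)*j) * dj j := by
      unfold AA
      rw [h2, mul_sub, mul_one, hT]
      ring
    rw [h1]
    refine Finset.dvd_sum fun j hj => dvd_mul_of_dvd_left ⟨-((i:ℤ)*j / D), by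
      linarith [Int.mul_ediv_add_emod ((i:ℤ)*j) (D:ℤ)]⟩ _
  exact Int.modEq_iff_dvd.mpr hdvd

lemma gcdcrit (D : ℕ) (hD : 2 ≤ D) (t : ℤ) :
    (∀ i ∈ Finset.Icc 1 (D-1), ¬ (D:ℤ) ∣ (i:ℤ) * t) ↔ Int.gcd t D = 1 := by
  constructor
  · intro h
    by_contra hg
    have hgD : (Int.gcd t D : ℤ) ∣ (D:ℤ) := Int.gcd_dvd_right _ _
    have hgDn : Int.gcd t D ∣ D := by exact_mod_cast hgD
    have hg0 : Int.gcd t D ≠ 0 := by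
      intro h0
      rw [Int.gcd_eq_zero_iff] at h0
      have : (D:ℤ) = 0 := h0.2
      omega
    set g := Int.gcd t D with hgdef
    have hg2 : 2 ≤ g := by omega
    have hgle : g ≤ D := Nat.le_of_dvd (by omega) hgDn
    have hmem : D / g ∈ Finset.Icc 1 (D-1) := by
      rw [Finset.mem_Icc]
      constructor
      · exact Nat.one_le_div_iff (by omega) |>.mpr hgle
      · have : D / g ≤ D / 2 := Nat.div_le_div_left hg2 (by omega)
        have := Nat.div_le_self D 2
        omega
    refine h (D / g) hmem ?_
    have hgt : (g:ℤ) ∣ t := Int.gcd_dvd_left _ _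
    obtain ⟨u, hu⟩ := hgt
    refine ⟨u, ?_⟩
    have hDg : g * (D / g) = D := Nat.mul_div_cancel' hgDn
    have hDg' : (D:ℤ) = (g:ℤ) * ((D/g : ℕ):ℤ) := by exact_mod_cast hDg.symm
    rw [hu, hDg']
    ring
  · intro h i hi hdvd
    rw [Finset.mem_Icc] at hi
    have hcop : IsCoprime (t:ℤ) (D:ℤ) := Int.isCoprime_iff_gcd_eq_one.mpr h
    have hDi : (D:ℤ) ∣ (i:ℤ) := hcop.symm.dvd_of_dvd_mul_right hdvd
    have : D ∣ i := by exact_mod_cast hDi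
    have := Nat.le_of_dvd (by omega) this
    omega

lemma E_eq_S (D : ℕ) (dj : ℕ → ℕ) (i : ℕ)
    (hE : E D dj i = ∑ j ∈ Finset.Icc 1 (D-1), (dj j:ℤ))
    (j : ℕ) (hj : j ∈ Finset.Icc 1 (D-1)) (hdvd : (D:ℤ) ∣ (i:ℤ)*j) : dj j = 0 := by
  have h1 : ∑ j ∈ Finset.Icc 1 (D-1),
      ((dj j:ℤ) - if (D:ℤ) ∣ (i:ℤ)*j then 0 else (dj j:ℤ)) = 0 := by
    rw [Finset.sum_sub_distrib]
    unfold E at hE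
    linarith
  have h2 := (Finset.sum_eq_zero_iff_of_nonneg (fun j _ => by
    split_ifs
    · simp
    · simp)).mp h1 j hj
  rw [if_pos hdvd] at h2
  have : (dj j : ℤ) = 0 := by linarith
  exact_mod_cast this

end Stmt6Aux

open Stmt6Aux in
theorem stmt6 (D d : ℕ) (hD : 2 ≤ D) (hd : 1 ≤ d) (dj : ℕ → ℕ)
    (hsum : ∑ j ∈ Finset.Icc 1 (D - 1), dj j ≤ d - 1)
    (s : ℕ → ℤ)
    (hs : ∀ i : ℕ, s i =
      ⌊(i : ℚ) / D - ∑ j ∈ Finset.Icc 1 (D - 1),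
        Int.fract ((i * j : ℚ) / D) * (dj j : ℚ)⌋ + d) :
    (∀ i ∈ Finset.Icc 1 (D - 1), s i + s (D - i) = d + 1) ↔
    (Int.gcd ((∑ j ∈ Finset.Icc 1 (D - 1), j * dj j : ℕ) - (1 : ℤ)) D = 1 ∧
     (∀ j ∈ Finset.Icc 1 (D - 1), ¬ Nat.Coprime j D → dj j = 0) ∧
     ∑ j ∈ Finset.Icc 1 (D - 1), dj j = d - 1) := by
  have hD0 : (0:ℤ) < (D:ℤ) := by exact_mod_cast (by omega : 0 < D)
  have hc : ((∑ j ∈ Finset.Icc 1 (D-1), dj j : ℕ) : ℤ)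
      = ∑ j ∈ Finset.Icc 1 (D-1), (dj j:ℤ) := by push_cast; rfl
  have hSd : (∑ j ∈ Finset.Icc 1 (D-1), (dj j:ℤ)) ≤ (d:ℤ) - 1 := by
    rw [← hc]; omega
  have hEle : ∀ i : ℕ, E D dj i ≤ ∑ j ∈ Finset.Icc 1 (D-1), (dj j:ℤ) := by
    intro i
    refine Finset.sum_le_sum fun j hj => ?_
    split_ifs
    · positivity
    · exact le_refl _
  have hTc : ((∑ j ∈ Finset.Icc 1 (D-1), j * dj j : ℕ) : ℤ)
      = ∑ j ∈ Finset.Icc 1 (D-1), (j:ℤ) * dj j := by push_cast; rfl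
  have hAmod : ∀ i : ℕ, (AA D dj i % D ≠ 0 ↔
      ¬ (D:ℤ) ∣ (i:ℤ) * ((∑ j ∈ Finset.Icc 1 (D-1), (j:ℤ) * dj j) - 1)) := by
    intro i
    rw [modA D dj i]
    have h1 : (i:ℤ) * (1 - ∑ j ∈ Finset.Icc 1 (D-1), (j:ℤ) * dj j)
        = -((i:ℤ) * ((∑ j ∈ Finset.Icc 1 (D-1), (j:ℤ) * dj j) - 1)) := by ring
    rw [h1]
    constructor
    · intro hne hdvd
      exact hne (Int.emod_eq_zero_of_dvd ((dvd_neg).mpr hdvd))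
    · intro hnd h0
      exact hnd ((dvd_neg).mp (Int.dvd_of_emod_eq_zero h0))
  have key : ∀ i ∈ Finset.Icc 1 (D-1),
      (s i + s (D - i) = d + 1) ↔ (AA D dj i % D ≠ 0 ∧ E D dj i = (d:ℤ) - 1) := by
    intro i hi
    rw [hs i, hs (D-i), floor_eq D dj i, floor_eq D dj (D-i)]
    have hq := Int.mul_ediv_add_emod (AA D dj i) D
    have hq' := Int.mul_ediv_add_emod (AA D dj (D-i)) D
    have hadd := addA D hD dj i hi
    have hr1 := Int.emod_nonneg (AA D dj i) (ne_of_gt hD0)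
    have hr2 := Int.emod_lt_of_pos (AA D dj i) hD0
    have hr3 := Int.emod_nonneg (AA D dj (D-i)) (ne_of_gt hD0)
    have hr4 := Int.emod_lt_of_pos (AA D dj (D-i)) hD0
    constructor
    · intro h
      have hqq : AA D dj i / D + AA D dj (D-i) / D = 1 - (d:ℤ) := by linarith
      have h2 : AA D dj i % D + AA D dj (D-i) % D = (D:ℤ) * ((d:ℤ) - E D dj i) := by
        linear_combination hq + hq' + hadd - (D:ℤ) * hqq
      have hge : 1 ≤ (d:ℤ) - E D dj i := by linarith [hEle i, hSd]
      have hlt : (d:ℤ) - E D dj i < 2 := by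
        by_contra hcon; push_neg at hcon
        have := mul_le_mul_of_nonneg_left hcon (le_of_lt hD0)
        linarith
      have hEd : E D dj i = (d:ℤ) - 1 := by omega
      refine ⟨?_, hEd⟩
      intro hr0
      rw [hEd] at h2
      have h3 : AA D dj i % D + AA D dj (D-i) % D = (D:ℤ) := by linear_combination h2
      rw [hr0] at h3
      linarith
    · rintro ⟨hr0, hE⟩
      have hm : AA D dj i % D + AA D dj (D-i) % D
          = (D:ℤ) * (1 - E D dj i - AA D dj i / D - AA D dj (D-i) / D) := by
        linear_combination hq + hq' + hadd
      have h0 : 0 < AA D dj i % D := lt_of_le_of_ne hr1 (Ne.symm hr0)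
      have hmm : 1 - E D dj i - AA D dj i / D - AA D dj (D-i) / D = 1 := by
        set m := 1 - E D dj i - AA D dj i / D - AA D dj (D-i) / D with hmdef
        have hpos : 0 < (D:ℤ) * m := by linarith
        have hlt : (D:ℤ) * m < 2 * D := by linarith
        have hm0 : 0 < m := by
          by_contra hcon; push_neg at hcon
          have := mul_le_mul_of_nonneg_left hcon (le_of_lt hD0)
          linarith
        have hm2 : m < 2 := by
          by_contra hcon; push_neg at hcon
          have := mul_le_mul_of_nonneg_left hcon (le_of_lt hD0)
          linarith
        omega
      rw [hE] at hmm
      linarith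
  have hE1 : E D dj 1 = ∑ j ∈ Finset.Icc 1 (D-1), (dj j:ℤ) := by
    unfold E
    refine Finset.sum_congr rfl fun j hj => ?_
    rw [Finset.mem_Icc] at hj
    split_ifs with hdvd
    · exfalso
      rw [Nat.cast_one, one_mul] at hdvd
      have hj0 : (0:ℤ) < (j:ℤ) := by exact_mod_cast (by omega : 0 < j)
      have := Int.le_of_dvd hj0 hdvd
      have : D ≤ j := by exact_mod_cast this
      omega
    · rfl
  constructor
  · intro h
    have h1mem : 1 ∈ Finset.Icc 1 (D-1) := by rw [Finset.mem_Icc]; omega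
    have hS1 := ((key 1 h1mem).mp (h 1 h1mem)).2
    rw [hE1, ← hc] at hS1
    refine ⟨?_, ?_, by omega⟩
    · rw [hTc]
      refine (gcdcrit D hD _).mp fun i hi => ?_
      exact (hAmod i).mp ((key i hi).mp (h i hi)).1
    · intro j hj hcop
      have hg1 : Nat.gcd j D ≠ 1 := hcop
      have hgD : Nat.gcd j D ∣ D := Nat.gcd_dvd_right j D
      have hgj : Nat.gcd j D ∣ j := Nat.gcd_dvd_left j D
      have hg0 : Nat.gcd j D ≠ 0 := by
        intro h0
        have := Nat.gcd_eq_zero_iff.mp h0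
        omega
      set g := Nat.gcd j D with hgdef
      have hg2 : 2 ≤ g := by omega
      have hgle : g ≤ D := Nat.le_of_dvd (by omega) hgD
      have hmem : D / g ∈ Finset.Icc 1 (D-1) := by
        rw [Finset.mem_Icc]
        constructor
        · exact Nat.one_le_div_iff (by omega) |>.mpr hgle
        · have : D / g ≤ D / 2 := Nat.div_le_div_left hg2 (by omega)
          have := Nat.div_le_self D 2
          omega
      have hdvd : (D:ℤ) ∣ ((D/g : ℕ):ℤ) * (j:ℤ) := by
        refine ⟨((j/g : ℕ):ℤ), ?_⟩
        have ha : g * (D/g) = D := Nat.mul_div_cancel' hgD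
        have hb : g * (j/g) = j := Nat.mul_div_cancel' hgj
        have hcalc : (D/g) * j = D * (j/g) := by
          calc (D/g)*j = (D/g)*(g*(j/g)) := by rw [hb]
          _ = (g*(D/g))*(j/g) := by ring
          _ = D*(j/g) := by rw [ha]
        exact_mod_cast congrArg (fun n : ℕ => (n:ℤ)) hcalc
      have hEd := ((key (D/g) hmem).mp (h (D/g) hmem)).2
      have hEeqS : E D dj (D/g) = ∑ j ∈ Finset.Icc 1 (D-1), (dj j:ℤ) :=
        le_antisymm (hEle _) (by rw [hEd]; exact hSd)
      exact E_eq_S D dj (D/g) hEeqS j hj hdvd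
  · rintro ⟨hgcd, h2, hS3⟩ i hi
    rw [hTc] at hgcd
    refine (key i hi).mpr ⟨(hAmod i).mpr ((gcdcrit D hD _).mpr hgcd i hi), ?_⟩
    have hEeq : E D dj i = ∑ j ∈ Finset.Icc 1 (D-1), (dj j:ℤ) := by
      unfold E
      refine Finset.sum_congr rfl fun j hj => ?_
      split_ifs with hdvd
      · by_cases hcop : Nat.Coprime j D
        · exfalso
          have hic : IsCoprime (j:ℤ) (D:ℤ) := by
            rw [Int.isCoprime_iff_gcd_eq_one, Int.gcd_natCast_natCast]
            exact hcop
          have hDi : (D:ℤ) ∣ (i:ℤ) := hic.symm.dvd_of_dvd_mul_right hdvd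
          have hDi' : D ∣ i := by exact_mod_cast hDi
          rw [Finset.mem_Icc] at hi
          have := Nat.le_of_dvd (by omega) hDi'
          omega
        · have := h2 j hj hcop
          simp [this]
      · rfl
    rw [hEeq, ← hc]
    omega
end

section
/- Let $d \geq 1$ and let $d_1, d_2 \geq 0$ with $d_1 + d_2 \leq d-1$. Let $A_3 \in \mathbb{Z}^{d\times d}$ be the identity except one row with diagonal entry $3$ containing $d_1$ ones and $d_2$ twos (elsewhere zero). Then the $\delta$-polynomial of $\mathcal{P}(A_3)$ is $1 + t^{k_1} + t^{k_2}$ where $k_1 = 1 - \lfloor (1 - d_1 - 2d_2)/3 \rfloor$ and $k_2 = 1 - \lfloor (2 - 2d_1 - d_2)/3 \rfloor$. -/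
open Set Pointwise

/-- The number of lattice points in the `n`-th dilation of `P ⊆ ℝ^N`. -/
noncomputable def ehr {N : ℕ} (P : Set (Fin N → ℝ)) (n : ℕ) : ℕ :=
  Set.ncard {x : Fin N → ℤ | (fun i => (x i : ℝ)) ∈ (n : ℝ) • P}

/-- The `i`-th coefficient of `(1-λ)^(d+1) * (1 + ∑_{n ≥ 1} i(P,n) λ^n)`,
i.e. the `i`-th entry of the δ-vector of a `d`-dimensional integral polytope. -/
noncomputable def deltaVec {N : ℕ} (P : Set (Fin N → ℝ)) (d i : ℕ) : ℤ :=
  ∑ j ∈ Finset.range (i + 1),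
    (-1 : ℤ) ^ (i - j) * (Nat.choose (d + 1) (i - j) : ℤ) * (ehr P j : ℤ)

/-- `P ⊆ ℝ^N` is an integral polytope of dimension `d`. -/
def IsIntegralPolytope {N : ℕ} (P : Set (Fin N → ℝ)) (d : ℕ) : Prop :=
  ∃ V : Finset (Fin N → ℤ), V.Nonempty ∧
    P = convexHull ℝ ((fun v i => ((v i : ℝ))) '' (V : Set (Fin N → ℤ))) ∧
    Module.finrank ℝ (vectorSpan ℝ P) = d



section Aux
open Finset PowerSeries


lemma hockey (D N : ℕ) : ∑ i ∈ Finset.range (N + 1), (i + D).choose D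
    = (N + D + 1).choose (D + 1) := by
  rw [← Nat.sum_Icc_choose]
  apply Finset.sum_nbij' (fun i => i + D) (fun j => j - D)
  · intro i hi; simp only [Finset.mem_range] at hi; simp only [Finset.mem_Icc]; omega
  · intro j hj; simp only [Finset.mem_Icc] at hj; simp only [Finset.mem_range]; omega
  · intro i hi; omega
  · intro j hj; simp only [Finset.mem_Icc] at hj; omega
  · intro i hi; rfl

variable {ι : Type*} [Fintype ι] [DecidableEq ι]

/-- functions supported on `s` with sum over `s` at most `N`. -/
def boxF (s : Finset ι) (N : ℕ) : Finset (ι → ℕ) :=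
  (Fintype.piFinset fun i => if i ∈ s then Finset.range (N + 1) else {0}).filter
    fun f => ∑ i ∈ s, f i ≤ N

lemma mem_boxF {s : Finset ι} {N : ℕ} {f : ι → ℕ} :
    f ∈ boxF s N ↔ (∀ i ∉ s, f i = 0) ∧ ∑ i ∈ s, f i ≤ N := by
  simp only [boxF, Finset.mem_filter, Fintype.mem_piFinset]
  constructor
  · rintro ⟨h1, h2⟩
    refine ⟨fun i hi => ?_, h2⟩
    have := h1 i; rw [if_neg hi] at this; simpa using this
  · rintro ⟨h1, h2⟩
    refine ⟨fun i => ?_, h2⟩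
    by_cases hi : i ∈ s
    · rw [if_pos hi, Finset.mem_range]
      calc f i ≤ ∑ j ∈ s, f j := Finset.single_le_sum (fun j _ => Nat.zero_le _) hi
      _ ≤ N := h2
      _ < N + 1 := Nat.lt_succ_self N
    · rw [if_neg hi]; simp [h1 i hi]

lemma card_boxF (s : Finset ι) (N : ℕ) :
    (boxF s N).card = (N + s.card).choose s.card := by
  induction s using Finset.induction_on generalizing N with
  | empty =>
    simp only [Finset.card_empty, Nat.choose_zero_right]
    rw [Finset.card_eq_one]
    refine ⟨fun _ => 0, ?_⟩
    ext f; simp [mem_boxF, funext_iff]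
  | @insert a s ha ih =>
    have Hmaps : ∀ f ∈ boxF (insert a s) N, f a ∈ Finset.range (N + 1) := by
      intro f hf
      rw [mem_boxF] at hf
      rw [Finset.mem_range]
      have h2 := hf.2
      have h3 : f a ≤ ∑ i ∈ insert a s, f i :=
        Finset.single_le_sum (fun j _ => Nat.zero_le _) (Finset.mem_insert_self a s)
      omega
    rw [Finset.card_eq_sum_card_fiberwise Hmaps]
    have hfib : ∀ t ∈ Finset.range (N + 1),
          ((boxF (insert a s) N).filter fun f => f a = t).card = (boxF s (N - t)).card := by
        intro t ht
        rw [Finset.mem_range] at ht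
        apply Finset.card_nbij' (fun f => Function.update f a 0)
          (fun g => Function.update g a t)
        · intro f hf
          simp only [Finset.mem_coe, Finset.mem_filter, mem_boxF] at hf ⊢
          obtain ⟨⟨h1, h2⟩, h3⟩ := hf
          rw [Finset.sum_insert ha] at h2
          constructor
          · intro i hi
            by_cases hia : i = a
            · subst hia; simp [Function.update]
            · rw [Function.update_of_ne hia]
              exact h1 i (by simp [hia, hi])
          · have : ∑ i ∈ s, Function.update f a 0 i = ∑ i ∈ s, f i :=
              Finset.sum_congr rfl fun i hi =>
                Function.update_of_ne (by rintro rfl; exact ha hi) _ _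
            omega
        · intro g hg
          simp only [Finset.mem_coe, Finset.mem_filter, mem_boxF] at hg ⊢
          obtain ⟨h1, h2⟩ := hg
          have hgs : ∑ i ∈ s, Function.update g a t i = ∑ i ∈ s, g i :=
            Finset.sum_congr rfl fun i hi =>
              Function.update_of_ne (by rintro rfl; exact ha hi) _ _
          refine ⟨⟨fun i hi => ?_, ?_⟩, ?_⟩
          · rw [Finset.mem_insert, not_or] at hi
            rw [Function.update_of_ne hi.1]
            exact h1 i hi.2
          · rw [Finset.sum_insert ha, hgs]; simp [Function.update]; omega
          · simp [Function.update]
        · intro f hf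
          simp only [Finset.mem_coe, Finset.mem_filter] at hf
          funext i
          by_cases hia : i = a
          · subst hia; simp [Function.update, hf.2]
          · simp [Function.update_of_ne hia]
        · intro g hg
          simp only [Finset.mem_coe, mem_boxF] at hg
          funext i
          by_cases hia : i = a
          · subst hia; simp only [Function.update_self]
            exact (hg.1 _ ha).symm
          · simp [Function.update_of_ne hia]
    rw [Finset.sum_congr rfl hfib]
    have : ∀ t ∈ Finset.range (N + 1), (boxF s (N - t)).card = (N - t + s.card).choose s.card :=
      fun t _ => ih (N - t)
    rw [Finset.sum_congr rfl this, ← Finset.sum_range_reflect]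
    have : ∀ t ∈ Finset.range (N + 1),
        (N - (N + 1 - 1 - t) + s.card).choose s.card = (t + s.card).choose s.card := by
      intro t ht; rw [Finset.mem_range] at ht
      have h5 : N - (N + 1 - 1 - t) = t := by omega
      rw [h5]
    rw [Finset.sum_congr rfl this, hockey, Finset.card_insert_of_notMem ha]
    rfl


lemma coeff_one_sub_X_pow (N u : ℕ) :
    (PowerSeries.coeff u) ((1 - PowerSeries.X : PowerSeries ℤ) ^ N)
      = (-1 : ℤ) ^ u * N.choose u := by
  rw [sub_eq_add_neg, add_comm, add_pow, map_sum]
  have : ∀ i ∈ Finset.range (N + 1),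
      (PowerSeries.coeff u) ((-PowerSeries.X : PowerSeries ℤ) ^ i * 1 ^ (N - i) * (N.choose i : ℤ⟦X⟧))
      = if u = i then (-1 : ℤ) ^ u * N.choose u else 0 := by
    intro i _
    have e : (-PowerSeries.X : ℤ⟦X⟧) ^ i * 1 ^ (N - i) * (N.choose i : ℤ⟦X⟧)
        = PowerSeries.C ((-1 : ℤ) ^ i * N.choose i) * PowerSeries.X ^ i := by
      rw [map_mul, map_pow, map_natCast, map_neg, map_one]
      ring
    rw [e, PowerSeries.coeff_C_mul_X_pow]
    split
    · next h => subst h; rfl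
    · rfl
  rw [Finset.sum_congr rfl this, Finset.sum_ite_eq (Finset.range (N+1)) u]
  by_cases hu : u ≤ N
  · simp [Finset.mem_range, Nat.lt_succ_of_le hu]
  · simp only [Finset.mem_range, if_neg (by omega : ¬ u < N + 1)]
    rw [Nat.choose_eq_zero_of_lt (by omega)]; simp

lemma base (d m : ℕ) :
    ∑ j ∈ Finset.range (m + 1),
      (-1 : ℤ) ^ (m - j) * ((d + 1).choose (m - j) : ℤ) * ((d + j).choose d : ℤ)
      = if m = 0 then 1 else 0 := by
  have h := (PowerSeries.invOneSubPow ℤ (d + 1)).inv_val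
  rw [PowerSeries.invOneSubPow_inv_eq_one_sub_pow,
    PowerSeries.invOneSubPow_val_succ_eq_mk_add_choose] at h
  have h2 := congrArg (PowerSeries.coeff m) h
  rw [PowerSeries.coeff_mul, Finset.Nat.sum_antidiagonal_eq_sum_range_succ_mk] at h2
  simp only [PowerSeries.coeff_mk, coeff_one_sub_X_pow, PowerSeries.coeff_one] at h2
  rw [← h2, ← Finset.sum_range_reflect]
  refine Finset.sum_congr rfl fun j hj => ?_
  rw [Finset.mem_range] at hj
  have h1 : m + 1 - 1 - j = m - j := by omega
  have h3 : m - (m - j) = j := by omega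
  rw [h1, h3, mul_assoc]

lemma choose_vanish {d kk j : ℕ} (hd : 1 ≤ d) (hj : j < kk) : (j + d - kk).choose d = 0 := by
  apply Nat.choose_eq_zero_of_lt; omega

lemma key (d kk i : ℕ) (hd : 1 ≤ d) :
    ∑ j ∈ Finset.range (i + 1),
      (-1 : ℤ) ^ (i - j) * ((d + 1).choose (i - j) : ℤ) * ((j + d - kk).choose d : ℤ)
      = if i = kk then 1 else 0 := by
  by_cases hik : kk ≤ i
  · rw [Finset.range_eq_Ico, ← Finset.sum_Ico_consecutive _ (Nat.zero_le kk) (by omega : kk ≤ i + 1)]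
    have h1 : ∑ j ∈ Finset.Ico 0 kk,
        (-1 : ℤ) ^ (i - j) * ((d + 1).choose (i - j) : ℤ) * ((j + d - kk).choose d : ℤ) = 0 := by
      apply Finset.sum_eq_zero
      intro j hj
      rw [Finset.mem_Ico] at hj
      rw [choose_vanish hd hj.2]
      simp
    rw [h1, zero_add, Finset.sum_Ico_eq_sum_range]
    have h2 : ∀ j ∈ Finset.range (i + 1 - kk),
        (-1 : ℤ) ^ (i - (kk + j)) * ((d + 1).choose (i - (kk + j)) : ℤ)
            * (((kk + j) + d - kk).choose d : ℤ)
        = (-1 : ℤ) ^ ((i - kk) - j) * ((d + 1).choose ((i - kk) - j) : ℤ)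
            * ((d + j).choose d : ℤ) := by
      intro j hj
      have e1 : i - (kk + j) = (i - kk) - j := by omega
      have e2 : kk + j + d - kk = d + j := by omega
      rw [e1, e2]
    have e3 : i + 1 - kk = (i - kk) + 1 := by omega
    rw [Finset.sum_congr rfl h2]
    rw [e3, base d (i - kk)]
    have : i - kk = 0 ↔ i = kk := by omega
    simp [this]
  · rw [if_neg (by omega)]
    apply Finset.sum_eq_zero
    intro j hj
    rw [Finset.mem_range] at hj
    rw [choose_vanish hd (by omega)]
    simp


lemma single_term (d kk : ℕ) (hkk : kk ≤ d) :
    ∑ i ∈ Finset.range (d + 1),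
      Polynomial.C (if i = kk then (1 : ℤ) else 0) * Polynomial.X ^ i
      = (Polynomial.X : Polynomial ℤ) ^ kk := by
  have h : ∀ i ∈ Finset.range (d+1), Polynomial.C (if i = kk then (1 : ℤ) else 0) * Polynomial.X ^ i
      = if i = kk then (Polynomial.X : Polynomial ℤ) ^ kk else 0 := by
    intro i _
    split
    · next h => subst h; simp
    · simp
  rw [Finset.sum_congr rfl h, Finset.sum_ite_eq' (Finset.range (d+1)) kk]
  rw [if_pos (Finset.mem_range.mpr (by omega))]



lemma hull_char (d : ℕ) (v : Fin d → (Fin d → ℝ)) :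
    convexHull ℝ (insert (0 : Fin d → ℝ) (Set.range v))
      = {x | ∃ lam : Fin d → ℝ, (∀ i, 0 ≤ lam i) ∧ (∑ i, lam i) ≤ 1
          ∧ x = ∑ i, lam i • v i} := by
  apply le_antisymm
  · apply convexHull_min
    · rintro x (rfl | ⟨i, rfl⟩)
      · exact ⟨0, fun i => le_refl 0, by simp, by simp⟩
      · refine ⟨fun j => if j = i then 1 else 0, fun j => by positivity, by simp, ?_⟩
        have h1 : ∀ j ∈ Finset.univ, (if j = i then (1:ℝ) else 0) • v j
            = if j = i then v j else 0 := by
          intro j _; split <;> simp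
        rw [Finset.sum_congr rfl h1, Finset.sum_ite_eq' Finset.univ i]
        simp
    · rintro x ⟨lam, hl0, hl1, rfl⟩ y ⟨mu, hm0, hm1, rfl⟩ p q hp hq hpq
      refine ⟨fun i => p * lam i + q * mu i,
        fun i => add_nonneg (mul_nonneg hp (hl0 i)) (mul_nonneg hq (hm0 i)), ?_, ?_⟩
      · rw [Finset.sum_add_distrib, ← Finset.mul_sum, ← Finset.mul_sum]
        nlinarith
      · rw [Finset.smul_sum, Finset.smul_sum, ← Finset.sum_add_distrib]
        refine Finset.sum_congr rfl fun i _ => ?_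
        rw [add_smul, smul_smul, smul_smul]
  · rintro x ⟨lam, hl0, hl1, rfl⟩
    have := Convex.sum_mem (t := (Finset.univ : Finset (Option (Fin d))))
      (w := fun o => Option.elim o (1 - ∑ i, lam i) lam)
      (z := fun o => Option.elim o 0 v)
      (convex_convexHull ℝ (insert (0 : Fin d → ℝ) (Set.range v))) ?_ ?_ ?_
    · convert this using 1
      rw [Fintype.sum_option]
      simp
    · rintro (_ | i) _
      · simpa using sub_nonneg.mpr hl1
      · exact hl0 i
    · rw [Fintype.sum_option]; simp
    · rintro (_ | i) _
      · exact subset_convexHull ℝ _ (Set.mem_insert _ _)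
      · exact subset_convexHull ℝ _ (Set.mem_insert_iff.mpr (Or.inr ⟨i, rfl⟩))

lemma smul_hull_char (d : ℕ) (v : Fin d → (Fin d → ℝ)) (n : ℕ) (x : Fin d → ℝ) :
    x ∈ (n : ℝ) • convexHull ℝ (insert (0 : Fin d → ℝ) (Set.range v))
      ↔ ∃ lam : Fin d → ℝ, (∀ i, 0 ≤ lam i) ∧ (∑ i, lam i) ≤ n
          ∧ x = ∑ i, lam i • v i := by
  rw [hull_char]
  rcases Nat.eq_zero_or_pos n with rfl | hn
  · have hne : Set.Nonempty {x : Fin d → ℝ | ∃ lam : Fin d → ℝ, (∀ i, 0 ≤ lam i)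
        ∧ (∑ i, lam i) ≤ 1 ∧ x = ∑ i, lam i • v i} :=
      ⟨0, 0, fun i => le_refl 0, by simp, by simp⟩
    rw [Nat.cast_zero, Set.zero_smul_set hne]
    simp only [Set.mem_zero]
    constructor
    · rintro rfl
      exact ⟨0, fun i => le_refl 0, by simp, by simp⟩
    · rintro ⟨lam, hl0, hl1, rfl⟩
      have hz : ∀ i ∈ Finset.univ, lam i = 0 := by
        intro i _
        have h1 : ∑ i, lam i = 0 := le_antisymm (by simpa using hl1)
          (Finset.sum_nonneg fun i _ => hl0 i)
        exact le_antisymm (h1 ▸ Finset.single_le_sum (fun j _ => hl0 j) (Finset.mem_univ i))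
          (hl0 i)
      rw [Finset.sum_congr rfl fun i hi => by rw [hz i hi, zero_smul]]
      simp
  · have hn' : (0 : ℝ) < n := by exact_mod_cast hn
    rw [Set.mem_smul_set]
    constructor
    · rintro ⟨y, ⟨lam, hl0, hl1, rfl⟩, rfl⟩
      refine ⟨fun i => n * lam i, fun i => mul_nonneg hn'.le (hl0 i), ?_, ?_⟩
      · rw [← Finset.mul_sum]
        nlinarith
      · rw [Finset.smul_sum]
        exact Finset.sum_congr rfl fun i _ => by rw [smul_smul]
    · rintro ⟨lam, hl0, hl1, rfl⟩
      refine ⟨∑ i, (lam i / n) • v i, ⟨fun i => lam i / n,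
        fun i => div_nonneg (hl0 i) hn'.le, ?_, rfl⟩, ?_⟩
      · rw [← Finset.sum_div]
        rw [div_le_one hn']
        exact hl1
      · rw [Finset.smul_sum]
        refine Finset.sum_congr rfl fun i _ => ?_
        rw [smul_smul, mul_div_cancel₀]
        exact hn'.ne'


section
variable {d : ℕ} (k : Fin d) (a : Fin d → ℤ)

lemma coords (A : Matrix (Fin d) (Fin d) ℤ)
    (hA : A = Matrix.of fun i j =>
      if i = k then (if j = k then (3 : ℤ) else if j < k then a j else 0)
      else if i = j then 1 else 0)
    (lam : Fin d → ℝ) (j : Fin d) :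
    (∑ i, lam i • (fun j' => (A i j' : ℝ))) j
      = if j = k then 3 * lam k else lam j + (if j < k then (a j : ℝ) else 0) * lam k := by
  rw [Finset.sum_apply]
  subst hA
  simp only [Pi.smul_apply, Matrix.of_apply, smul_eq_mul]
  rw [← Finset.sum_erase_add _ _ (Finset.mem_univ k)]
  have h1 : ∀ i ∈ Finset.univ.erase k,
      lam i * ((if i = k then (if j = k then (3 : ℤ) else if j < k then a j else 0)
        else if i = j then 1 else 0 : ℤ) : ℝ)
      = if i = j then lam i else 0 := by
    intro i hi
    rw [Finset.mem_erase] at hi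
    rw [if_neg hi.1]
    split <;> simp
  rw [Finset.sum_congr rfl h1, Finset.sum_ite_eq' (Finset.univ.erase k) j]
  by_cases hj : j = k
  · subst hj
    simp [mul_comm]
  · simp only [if_pos (Finset.mem_erase.mpr ⟨hj, Finset.mem_univ j⟩), if_pos rfl, if_neg hj]
    push_cast [apply_ite (fun z : ℤ => (z : ℝ))]
    ring

lemma mem_char (A : Matrix (Fin d) (Fin d) ℤ)
    (hA : A = Matrix.of fun i j =>
      if i = k then (if j = k then (3 : ℤ) else if j < k then a j else 0)
      else if i = j then 1 else 0)
    (P : Set (Fin d → ℝ))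
    (hP : P = convexHull ℝ
      (insert (0 : Fin d → ℝ) (Set.range fun i j => (A i j : ℝ))))
    (c : Fin d → ℤ) (hc : c = fun j => if j < k then a j else 0)
    (n : ℕ) (x : Fin d → ℤ) :
    ((fun i => (x i : ℝ)) ∈ (n : ℝ) • P) ↔
      (0 ≤ x k ∧ (∀ j, j ≠ k → c j * x k ≤ 3 * x j) ∧
        3 * (∑ j ∈ Finset.univ.erase k, x j)
          + (1 - ∑ j ∈ Finset.univ.erase k, c j) * x k ≤ 3 * n) := by
  have hcast : ∀ j : Fin d, ((c j : ℤ) : ℝ) = if j < k then (a j : ℝ) else 0 := by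
    intro j; rw [hc]; push_cast [apply_ite (fun z : ℤ => (z : ℝ))]; rfl
  rw [hP, smul_hull_char]
  constructor
  · rintro ⟨lam, hl0, hl1, hx⟩
    have hco : ∀ j : Fin d, (x j : ℝ)
        = if j = k then 3 * lam k else lam j + (c j : ℝ) * lam k := by
      intro j
      rw [hcast j, ← coords k a A hA lam j]
      exact congrFun hx j
    have hk : (x k : ℝ) = 3 * lam k := by simpa using hco k
    have hne : ∀ j : Fin d, j ≠ k → (x j : ℝ) = lam j + (c j : ℝ) * lam k := by
      intro j hj; simpa [hj] using hco j
    refine ⟨?_, ?_, ?_⟩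
    · have : (0 : ℝ) ≤ (x k : ℝ) := by rw [hk]; linarith [hl0 k]
      exact_mod_cast this
    · intro j hj
      have : ((c j : ℤ) : ℝ) * (x k : ℝ) ≤ 3 * (x j : ℝ) := by
        rw [hk, hne j hj]
        have := hl0 j
        nlinarith
      exact_mod_cast this
    · have hsum : ((∑ j ∈ Finset.univ.erase k, x j : ℤ) : ℝ)
          = ∑ j ∈ Finset.univ.erase k, lam j
            + (∑ j ∈ Finset.univ.erase k, (c j : ℝ)) * lam k := by
        push_cast
        rw [Finset.sum_congr rfl fun j hj => hne j (Finset.mem_erase.mp hj).1,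
          Finset.sum_add_distrib, Finset.sum_mul]
      have hsl : ∑ j ∈ Finset.univ.erase k, lam j + lam k ≤ n := by
        rw [Finset.sum_erase_add _ _ (Finset.mem_univ k)] at *
        exact hl1
      have goal : (3 * (∑ j ∈ Finset.univ.erase k, x j : ℤ) : ℝ)
          + ((1 : ℝ) - ((∑ j ∈ Finset.univ.erase k, c j : ℤ) : ℝ)) * (x k : ℝ)
          ≤ 3 * n := by
        push_cast at hsum ⊢
        rw [hsum, hk]
        ring_nf
        nlinarith [hsl]
      exact_mod_cast goal
  · rintro ⟨hxk, hineq, hsum⟩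
    refine ⟨fun j => if j = k then (x k : ℝ) / 3 else (x j : ℝ) - (c j : ℝ) * (x k : ℝ) / 3,
      ?_, ?_, ?_⟩
    · intro j
      dsimp only
      by_cases hj : j = k
      · rw [if_pos hj]
        have : (0 : ℝ) ≤ (x k : ℝ) := by exact_mod_cast hxk
        linarith
      · rw [if_neg hj]
        have h1 : ((c j : ℤ) : ℝ) * (x k : ℝ) ≤ 3 * (x j : ℝ) := by exact_mod_cast hineq j hj
        linarith
    · rw [← Finset.sum_erase_add _ _ (Finset.mem_univ k), if_pos rfl]
      have h2 : ∀ j ∈ Finset.univ.erase k,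
          (if j = k then (x k : ℝ) / 3 else (x j : ℝ) - (c j : ℝ) * (x k : ℝ) / 3)
          = (x j : ℝ) - (c j : ℝ) * (x k : ℝ) / 3 := by
        intro j hj; rw [if_neg (Finset.mem_erase.mp hj).1]
      rw [Finset.sum_congr rfl h2, Finset.sum_sub_distrib]
      have h3 : ∑ j ∈ Finset.univ.erase k, (c j : ℝ) * (x k : ℝ) / 3
          = (∑ j ∈ Finset.univ.erase k, (c j : ℝ)) * (x k : ℝ) / 3 := by
        rw [Finset.sum_mul, Finset.sum_div]
      rw [h3]
      have hs : (3 * (∑ j ∈ Finset.univ.erase k, x j : ℤ) : ℝ)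
          + ((1 : ℝ) - ((∑ j ∈ Finset.univ.erase k, c j : ℤ) : ℝ)) * (x k : ℝ) ≤ 3 * n := by
        exact_mod_cast hsum
      push_cast at hs ⊢
      linarith
    · funext j
      rw [coords k a A hA _ j]
      by_cases hj : j = k
      · subst hj; rw [if_pos rfl, if_pos rfl]; ring
      · rw [if_neg hj, if_neg hj, if_pos rfl]
        rw [← hcast j]
        ring
end


def SLe (d1 d2 n m : ℤ) : ℤ :=
  n + ((d1 + 2*d2 - 1) * m) / 3 - d1 * ((m + 2)/3) - d2 * ((2*m + 2)/3)

lemma SLe0 (d1 d2 n q : ℤ) : SLe d1 d2 n (3*q) = n - q := by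
  unfold SLe
  have q1 : ((d1 + 2*d2 - 1) * (3*q)) / 3 = (d1 + 2*d2 - 1) * q := by
    rw [show (d1 + 2*d2 - 1) * (3*q) = ((d1 + 2*d2 - 1) * q) * 3 by ring,
      Int.mul_ediv_cancel _ (by norm_num)]
  have q2 : ((3*q : ℤ) + 2)/3 = q := by
    rw [show (3*q : ℤ) + 2 = 2 + q * 3 by ring, Int.add_mul_ediv_right _ _ (by norm_num)]
    norm_num
  have q3 : (2*(3*q : ℤ) + 2)/3 = 2*q := by
    rw [show 2*(3*q : ℤ) + 2 = 2 + (2*q) * 3 by ring, Int.add_mul_ediv_right _ _ (by norm_num)]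
    norm_num
  rw [q1, q2, q3]; ring

lemma SLe1 (d1 d2 n q : ℤ) : SLe d1 d2 n (3*q+1) = n - q - (1 - (2 - 2*d1 - d2)/3) := by
  unfold SLe
  have q1 : ((d1 + 2*d2 - 1) * (3*q+1)) / 3 = (d1 + 2*d2 - 1)/3 + (d1 + 2*d2 - 1) * q := by
    rw [show (d1 + 2*d2 - 1) * (3*q+1) = (d1 + 2*d2 - 1) + ((d1 + 2*d2 - 1) * q) * 3 by ring,
      Int.add_mul_ediv_right _ _ (by norm_num)]
  have q2 : ((3*q+1 : ℤ) + 2)/3 = q + 1 := by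
    rw [show (3*q+1 : ℤ) + 2 = 3 + q * 3 by ring, Int.add_mul_ediv_right _ _ (by norm_num)]
    norm_num; ring
  have q3 : (2*(3*q+1 : ℤ) + 2)/3 = 2*q + 1 := by
    rw [show 2*(3*q+1 : ℤ) + 2 = 4 + (2*q) * 3 by ring, Int.add_mul_ediv_right _ _ (by norm_num)]
    norm_num; ring
  rw [q1, q2, q3]
  have h : (d1 + 2*d2 - 1)/3 - d1 - d2 = (2 - 2*d1 - d2)/3 - 1 := by omega
  linear_combination h

lemma SLe2 (d1 d2 n q : ℤ) : SLe d1 d2 n (3*q+2) = n - q - (1 - (1 - d1 - 2*d2)/3) := by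
  unfold SLe
  have q1 : ((d1 + 2*d2 - 1) * (3*q+2)) / 3 = (2*d1 + 4*d2 - 2)/3 + (d1 + 2*d2 - 1) * q := by
    rw [show (d1 + 2*d2 - 1) * (3*q+2) = (2*d1 + 4*d2 - 2) + ((d1 + 2*d2 - 1) * q) * 3 by ring,
      Int.add_mul_ediv_right _ _ (by norm_num)]
  have q2 : ((3*q+2 : ℤ) + 2)/3 = q + 1 := by
    rw [show (3*q+2 : ℤ) + 2 = 4 + q * 3 by ring, Int.add_mul_ediv_right _ _ (by norm_num)]
    norm_num; ring
  have q3 : (2*(3*q+2 : ℤ) + 2)/3 = 2*q + 2 := by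
    rw [show 2*(3*q+2 : ℤ) + 2 = 6 + (2*q) * 3 by ring, Int.add_mul_ediv_right _ _ (by norm_num)]
    norm_num; ring
  rw [q1, q2, q3]
  have h : (2*d1 + 4*d2 - 2)/3 - d1 - 2*d2 = (1 - d1 - 2*d2)/3 - 1 := by omega
  linear_combination h

lemma sum_range_three (n : ℕ) (F : ℕ → ℕ) :
    ∑ m ∈ Finset.range (3*n+1), F m
      = ∑ q ∈ Finset.range (n+1), F (3*q) + ∑ q ∈ Finset.range n, F (3*q+1)
        + ∑ q ∈ Finset.range n, F (3*q+2) := by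
  induction n with
  | zero => simp
  | succ n ih =>
    have e : 3*(n+1)+1 = (3*n+1) + 1 + 1 + 1 := by ring
    rw [e, Finset.sum_range_succ, Finset.sum_range_succ, Finset.sum_range_succ, ih,
      Finset.sum_range_succ (fun q => F (3*q)) (n+1), Finset.sum_range_succ (fun q => F (3*q+1)) n,
      Finset.sum_range_succ (fun q => F (3*q+2)) n]
    have e1 : 3*n+1+1 = 3*n+2 := by ring
    have e2 : 3*n+1+1+1 = 3*(n+1) := by ring
    rw [e1, e2]
    ring

lemma hockey' (D N : ℕ) : ∑ i ∈ Finset.range (N + 1), (i + D).choose D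
    = (N + D + 1).choose (D + 1) := by
  rw [← Nat.sum_Icc_choose]
  apply Finset.sum_nbij' (fun i => i + D) (fun j => j - D)
  · intro i hi; simp only [Finset.mem_range] at hi; simp only [Finset.mem_Icc]; omega
  · intro j hj; simp only [Finset.mem_Icc] at hj; simp only [Finset.mem_range]; omega
  · intro i hi; omega
  · intro j hj; simp only [Finset.mem_Icc] at hj; omega
  · intro i hi; rfl

lemma refl_hockey (D N : ℕ) : ∑ q ∈ Finset.range (N + 1), ((N - q) + D).choose D
    = (N + D + 1).choose (D + 1) := by
  rw [← hockey' D N, ← Finset.sum_range_reflect]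
  refine Finset.sum_congr rfl fun q hq => ?_
  rw [Finset.mem_range] at hq
  congr 1
  omega

lemma shifted_sum (D n K : ℕ) (hK : 1 ≤ K) :
    ∑ q ∈ Finset.range n, (if K + q ≤ n then ((n - q - K) + D).choose D else 0)
      = (n + (D + 1) - K).choose (D + 1) := by
  by_cases hn : K ≤ n
  · rw [← Finset.sum_subset (Finset.range_subset_range.mpr (by omega : n - K + 1 ≤ n))]
    · have h1 : ∀ q ∈ Finset.range (n - K + 1),
          (if K + q ≤ n then ((n - q - K) + D).choose D else 0)
          = (((n - K) - q) + D).choose D := by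
        intro q hq
        rw [Finset.mem_range] at hq
        rw [if_pos (by omega)]
        congr 2
        omega
      rw [Finset.sum_congr rfl h1, refl_hockey]
      congr 1
      omega
    · intro q hq hq2
      rw [Finset.mem_range] at hq
      rw [Finset.mem_range] at hq2
      rw [if_neg (by omega)]
  · rw [Finset.sum_eq_zero, eq_comm, Nat.choose_eq_zero_of_lt (by omega)]
    intro q hq
    rw [if_neg (by omega)]

lemma residue_sum (d : ℕ) (hd : 1 ≤ d) (d1 d2 n : ℕ) (K1 K2 : ℕ)
    (hK1 : (K1 : ℤ) = 1 - (1 - (d1:ℤ) - 2*(d2:ℤ))/3)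
    (hK2 : (K2 : ℤ) = 1 - (2 - 2*(d1:ℤ) - (d2:ℤ))/3) :
    ∑ m ∈ (Finset.range (3*n+1)).filter
        (fun m : ℕ => 0 ≤ SLe (d1:ℤ) (d2:ℤ) (n:ℤ) (m:ℤ)),
      ((SLe (d1:ℤ) (d2:ℤ) (n:ℤ) (m:ℤ)).toNat + (d-1)).choose (d-1)
      = (n + d).choose d + (n + d - K1).choose d + (n + d - K2).choose d := by
  have hK1ge : 1 ≤ K1 := by omega
  have hK2ge : 1 ≤ K2 := by omega
  rw [Finset.sum_filter, sum_range_three]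
  have h0 : ∀ q ∈ Finset.range (n+1),
      (if 0 ≤ SLe (d1:ℤ) (d2:ℤ) (n:ℤ) ((3*q : ℕ):ℤ) then
        ((SLe (d1:ℤ) (d2:ℤ) (n:ℤ) ((3*q : ℕ):ℤ)).toNat + (d-1)).choose (d-1) else 0)
      = ((n - q) + (d-1)).choose (d-1) := by
    intro q hq
    rw [Finset.mem_range] at hq
    have e : ((3*q : ℕ) : ℤ) = 3*(q:ℤ) := by push_cast; ring
    rw [e, SLe0]
    rw [if_pos (by omega)]
    congr 2
    omega
  have h1 : ∀ q ∈ Finset.range n,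
      (if 0 ≤ SLe (d1:ℤ) (d2:ℤ) (n:ℤ) ((3*q+1 : ℕ):ℤ) then
        ((SLe (d1:ℤ) (d2:ℤ) (n:ℤ) ((3*q+1 : ℕ):ℤ)).toNat + (d-1)).choose (d-1) else 0)
      = (if K2 + q ≤ n then ((n - q - K2) + (d-1)).choose (d-1) else 0) := by
    intro q hq
    have e : ((3*q+1 : ℕ) : ℤ) = 3*(q:ℤ)+1 := by push_cast; ring
    rw [e, SLe1, ← hK2]
    by_cases h : K2 + q ≤ n
    · rw [if_pos (by omega), if_pos h]
      congr 2
      omega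
    · rw [if_neg (by omega), if_neg h]
  have h2 : ∀ q ∈ Finset.range n,
      (if 0 ≤ SLe (d1:ℤ) (d2:ℤ) (n:ℤ) ((3*q+2 : ℕ):ℤ) then
        ((SLe (d1:ℤ) (d2:ℤ) (n:ℤ) ((3*q+2 : ℕ):ℤ)).toNat + (d-1)).choose (d-1) else 0)
      = (if K1 + q ≤ n then ((n - q - K1) + (d-1)).choose (d-1) else 0) := by
    intro q hq
    have e : ((3*q+2 : ℕ) : ℤ) = 3*(q:ℤ)+2 := by push_cast; ring
    rw [e, SLe2, ← hK1]
    by_cases h : K1 + q ≤ n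
    · rw [if_pos (by omega), if_pos h]
      congr 2
      omega
    · rw [if_neg (by omega), if_neg h]
  rw [Finset.sum_congr rfl h0, Finset.sum_congr rfl h1, Finset.sum_congr rfl h2,
    refl_hockey, shifted_sum _ _ _ hK2ge, shifted_sum _ _ _ hK1ge]
  have e1 : n + (d-1) + 1 = n + d := by omega
  have e2 : n + ((d-1)+1) - K1 = n + d - K1 := by omega
  have e3 : n + ((d-1)+1) - K2 = n + d - K2 := by omega
  rw [e1, e2, e3, Nat.sub_one_add_one (by omega : d ≠ 0)]
  ring


def Phi {d : ℕ} (k : Fin d) (c : Fin d → ℤ) (m : ℕ) (y : Fin d → ℕ) : Fin d → ℤ :=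
  fun j => if j = k then (m:ℤ) else (y j : ℤ) + (c j * (m:ℤ) + 2)/3

lemma count_main (d : ℕ) (hd : 1 ≤ d) (k : Fin d) (c : Fin d → ℤ)
    (hc0 : ∀ j : Fin d, j ≠ k → c j = 0 ∨ c j = 1 ∨ c j = 2)
    (d1 d2 : ℕ)
    (hd1 : d1 = ((Finset.univ.erase k).filter fun j => c j = 1).card)
    (hd2 : d2 = ((Finset.univ.erase k).filter fun j => c j = 2).card)
    (K1 K2 : ℕ)
    (hK1 : (K1 : ℤ) = 1 - (1 - (d1:ℤ) - 2*(d2:ℤ))/3)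
    (hK2 : (K2 : ℤ) = 1 - (2 - 2*(d1:ℤ) - (d2:ℤ))/3)
    (n : ℕ) :
    {x : Fin d → ℤ | 0 ≤ x k ∧ (∀ j, j ≠ k → c j * x k ≤ 3 * x j) ∧
      3 * (∑ j ∈ Finset.univ.erase k, x j)
        + (1 - ∑ j ∈ Finset.univ.erase k, c j) * x k ≤ 3 * (n:ℤ)}.ncard
    = (n + d).choose d + (n + d - K1).choose d + (n + d - K2).choose d := by
  have hEcard : (Finset.univ.erase k).card = d - 1 := by
    rw [Finset.card_erase_of_mem (Finset.mem_univ k), Finset.card_univ, Fintype.card_fin]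
  -- sum of c over E
  have hsplit : ∀ (f : ℤ → ℤ),
      ∑ j ∈ Finset.univ.erase k, f (c j)
        = (d1:ℤ) * f 1 + (d2:ℤ) * f 2 + ((d - 1 - d1 - d2 : ℕ) : ℤ) * f 0 := by
    intro f
    have h1 : ∀ j ∈ Finset.univ.erase k,
        f (c j) = if c j = 1 then f 1 else if c j = 2 then f 2 else f 0 := by
      intro j hj
      rcases hc0 j (Finset.mem_erase.mp hj).1 with h | h | h <;> simp [h]
    rw [Finset.sum_congr rfl h1, Finset.sum_ite, Finset.sum_ite, Finset.sum_const,
      Finset.sum_const, Finset.sum_const, Finset.filter_filter, Finset.filter_filter]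
    have e2 : (Finset.univ.erase k).filter (fun j => ¬ c j = 1 ∧ c j = 2)
        = (Finset.univ.erase k).filter (fun j => c j = 2) := by
      apply Finset.filter_congr
      intro j hj
      constructor
      · rintro ⟨_, h⟩; exact h
      · intro h; exact ⟨by rw [h]; norm_num, h⟩
    have e3 : ((Finset.univ.erase k).filter (fun j => ¬ c j = 1 ∧ ¬ c j = 2)).card
        = d - 1 - d1 - d2 := by
      have hdisj : ∀ j ∈ Finset.univ.erase k,
          (¬ c j = 1 ∧ ¬ c j = 2) ↔ ¬ (c j = 1 ∨ c j = 2) := by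
        intro j hj; tauto
      have hdisj2 : Disjoint ((Finset.univ.erase k).filter (fun j => c j = 1))
          ((Finset.univ.erase k).filter (fun j => c j = 2)) := by
        rw [Finset.disjoint_filter]
        intro j _ hh1 hh2
        rw [hh1] at hh2; norm_num at hh2
      rw [Finset.filter_congr hdisj, Finset.filter_not, Finset.card_sdiff_of_subset
        (Finset.filter_subset _ _), hEcard, Finset.filter_or,
        Finset.card_union_of_disjoint hdisj2, ← hd1, ← hd2]
      omega
    rw [e2, e3, ← hd1, ← hd2]
    push_cast
    ring
  have hsE : ∑ j ∈ Finset.univ.erase k, c j = (d1:ℤ) + 2*(d2:ℤ) := by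
    exact (hsplit (fun z => z)).trans (by push_cast; ring)
  have sumL : ∀ m : ℕ, ∑ j ∈ Finset.univ.erase k, (c j * (m:ℤ) + 2)/3
      = (d1:ℤ) * (((m:ℤ)+2)/3) + (d2:ℤ) * ((2*(m:ℤ)+2)/3) := by
    intro m
    refine (hsplit (fun z => (z * (m:ℤ) + 2)/3)).trans ?_
    norm_num
  have hSL_eq : ∀ m : ℕ, SLe (d1:ℤ) (d2:ℤ) (n:ℤ) (m:ℤ)
      = (n:ℤ) + (((d1:ℤ)+2*(d2:ℤ)-1) * (m:ℤ))/3
        - ∑ j ∈ Finset.univ.erase k, (c j * (m:ℤ) + 2)/3 := by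
    intro m
    unfold SLe
    linarith [sumL m]
  set M := (Finset.range (3*n+1)).filter
    (fun m : ℕ => 0 ≤ SLe (d1:ℤ) (d2:ℤ) (n:ℤ) (m:ℤ)) with hM
  set G := M.biUnion (fun m =>
    (boxF (Finset.univ.erase k) ((SLe (d1:ℤ) (d2:ℤ) (n:ℤ) (m:ℤ)).toNat)).image (Phi k c m))
    with hG
  have hset : {x : Fin d → ℤ | 0 ≤ x k ∧ (∀ j, j ≠ k → c j * x k ≤ 3 * x j) ∧
      3 * (∑ j ∈ Finset.univ.erase k, x j)
        + (1 - ∑ j ∈ Finset.univ.erase k, c j) * x k ≤ 3 * (n:ℤ)} = (↑G : Set (Fin d → ℤ)) := by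
    ext x
    simp only [Set.mem_setOf_eq, Finset.coe_biUnion, Set.mem_iUnion, Finset.mem_coe,
      Finset.mem_image, hG, Finset.mem_biUnion]
    constructor
    · rintro ⟨hxk, hineq, hsum⟩
      obtain ⟨m, hm⟩ : ∃ m : ℕ, (m:ℤ) = x k := ⟨(x k).toNat, Int.toNat_of_nonneg hxk⟩
      have hL : ∀ j ∈ Finset.univ.erase k, (c j * (m:ℤ) + 2)/3 ≤ x j := by
        intro j hj
        have h3 := hineq j (Finset.mem_erase.mp hj).1
        rw [← hm] at h3
        omega
      have hsumL_le : ∑ j ∈ Finset.univ.erase k, (c j * (m:ℤ) + 2)/3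
          ≤ ∑ j ∈ Finset.univ.erase k, x j := Finset.sum_le_sum hL
      have hsum' : 3 * ∑ j ∈ Finset.univ.erase k, x j
          ≤ 3*(n:ℤ) + ((d1:ℤ)+2*(d2:ℤ)-1) * (m:ℤ) := by
        rw [hsE, ← hm] at hsum
        linarith
      have hSL0 : 0 ≤ SLe (d1:ℤ) (d2:ℤ) (n:ℤ) (m:ℤ) := by
        rw [hSL_eq m]
        omega
      have hcm : ∑ j ∈ Finset.univ.erase k, (c j * (m:ℤ)) = ((d1:ℤ)+2*(d2:ℤ)) * (m:ℤ) := by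
        rw [← Finset.sum_mul, hsE]
      have h5 : ((d1:ℤ)+2*(d2:ℤ)) * (m:ℤ) ≤ 3 * ∑ j ∈ Finset.univ.erase k, x j := by
        rw [← hcm, Finset.mul_sum]
        apply Finset.sum_le_sum
        intro j hj
        have := hineq j (Finset.mem_erase.mp hj).1
        rw [← hm] at this
        exact this
      have hm3n : m ≤ 3*n := by
        have : (m:ℤ) ≤ 3*(n:ℤ) := by linarith
        exact_mod_cast this
      refine ⟨m, Finset.mem_filter.mpr ⟨Finset.mem_range.mpr (by omega), hSL0⟩,
        (fun j => if j = k then 0 else (x j - (c j * (m:ℤ) + 2)/3).toNat), ?_, ?_⟩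
      · rw [mem_boxF]
        have hy : ∀ j ∈ Finset.univ.erase k,
            ((if j = k then 0 else (x j - (c j * (m:ℤ) + 2)/3).toNat : ℕ) : ℤ)
            = x j - (c j * (m:ℤ) + 2)/3 := by
          intro j hj
          rw [if_neg (Finset.mem_erase.mp hj).1, Int.toNat_of_nonneg (by linarith [hL j hj])]
        constructor
        · intro j hj
          have : j = k := by
            by_contra hne
            exact hj (Finset.mem_erase.mpr ⟨hne, Finset.mem_univ j⟩)
          rw [if_pos this]
        · have hys : ((∑ j ∈ Finset.univ.erase k,
              (if j = k then 0 else (x j - (c j * (m:ℤ) + 2)/3).toNat) : ℕ) : ℤ)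
              = ∑ j ∈ Finset.univ.erase k, x j
                - ∑ j ∈ Finset.univ.erase k, (c j * (m:ℤ) + 2)/3 := by
            rw [Nat.cast_sum, Finset.sum_congr rfl hy, Finset.sum_sub_distrib]
          have hle := hSL_eq m
          omega
      · funext j
        unfold Phi
        by_cases hj : j = k
        · rw [if_pos hj, hj, hm]
        · rw [if_neg hj]
          dsimp only
          rw [if_neg hj]
          have hLj := hL j (Finset.mem_erase.mpr ⟨hj, Finset.mem_univ j⟩)
          rw [Int.toNat_of_nonneg (by linarith)]
          ring
    · rintro ⟨m, hmM, y, hyb, rfl⟩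
      rw [hM, Finset.mem_filter] at hmM
      obtain ⟨hmr, hSL0⟩ := hmM
      rw [mem_boxF] at hyb
      obtain ⟨hy0, hysum⟩ := hyb
      have hPk : Phi k c m y k = (m:ℤ) := by unfold Phi; rw [if_pos rfl]
      have hPj : ∀ j, j ≠ k → Phi k c m y j = (y j : ℤ) + (c j * (m:ℤ) + 2)/3 := by
        intro j hj; unfold Phi; rw [if_neg hj]
      refine ⟨by rw [hPk]; positivity, ?_, ?_⟩
      · intro j hj
        rw [hPk, hPj j hj]
        omega
      · have hsum1 : ∑ j ∈ Finset.univ.erase k, Phi k c m y j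
            = ((∑ j ∈ Finset.univ.erase k, y j : ℕ) : ℤ)
              + ∑ j ∈ Finset.univ.erase k, (c j * (m:ℤ) + 2)/3 := by
          push_cast
          rw [← Finset.sum_add_distrib]
          exact Finset.sum_congr rfl fun j hj => hPj j (Finset.mem_erase.mp hj).1
        rw [hsE, hPk, hsum1]
        have hle := hSL_eq m
        have hstep : 3 * (((∑ j ∈ Finset.univ.erase k, y j : ℕ) : ℤ)
            + ∑ j ∈ Finset.univ.erase k, (c j * (m:ℤ) + 2)/3)
            ≤ 3*(n:ℤ) + ((d1:ℤ)+2*(d2:ℤ)-1) * (m:ℤ) := by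
          omega
        linarith
  rw [hset, Set.ncard_coe_finset, hG]
  rw [Finset.card_biUnion]
  · have hcards : ∀ m ∈ M,
        ((boxF (Finset.univ.erase k)
          ((SLe (d1:ℤ) (d2:ℤ) (n:ℤ) (m:ℤ)).toNat)).image (Phi k c m)).card
        = ((SLe (d1:ℤ) (d2:ℤ) (n:ℤ) (m:ℤ)).toNat + (d-1)).choose (d-1) := by
      intro m hm
      rw [Finset.card_image_of_injOn, card_boxF, hEcard]
      intro y1 h1 y2 h2 heq
      rw [Finset.mem_coe, mem_boxF] at h1 h2
      funext j
      by_cases hj : j = k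
      · rw [hj, h1.1 k (Finset.notMem_erase k _), h2.1 k (Finset.notMem_erase k _)]
      · have := congrFun heq j
        unfold Phi at this
        rw [if_neg hj, if_neg hj] at this
        omega
    rw [Finset.sum_congr rfl hcards]
    exact residue_sum d hd d1 d2 n K1 K2 hK1 hK2
  · intro m1 h1 m2 h2 hne
    dsimp only [Function.onFun]; rw [Finset.disjoint_left]
    intro x hx1 hx2
    rw [Finset.mem_image] at hx1 hx2
    obtain ⟨y1, _, hy1⟩ := hx1
    obtain ⟨y2, _, hy2⟩ := hx2
    apply hne
    have e1 : x k = (m1:ℤ) := by rw [← hy1]; unfold Phi; rw [if_pos rfl]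
    have e2 : x k = (m2:ℤ) := by rw [← hy2]; unfold Phi; rw [if_pos rfl]
    exact_mod_cast e1 ▸ e2

end Aux

section Aux2
open Finset

lemma poly_assembly (d : ℕ) (hd : 1 ≤ d) (P : Set (Fin d → ℝ)) (k1 k2 : ℕ)
    (hk1 : 1 ≤ k1) (hk1d : k1 ≤ d) (hk2 : 1 ≤ k2) (hk2d : k2 ≤ d)
    (h_ehr : ∀ n : ℕ, (ehr P n : ℤ) = ((n + d).choose d : ℤ)
      + ((n + d - k1).choose d : ℤ) + ((n + d - k2).choose d : ℤ)) :
    ∑ i ∈ Finset.range (d + 1), Polynomial.C (deltaVec P d i) * Polynomial.X ^ i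
      = 1 + (Polynomial.X : Polynomial ℤ) ^ k1 + (Polynomial.X : Polynomial ℤ) ^ k2 := by
  have hdelta : ∀ i, deltaVec P d i = (if i = 0 then 1 else 0)
      + (if i = k1 then 1 else 0) + (if i = k2 then 1 else 0) := by
    intro i
    unfold deltaVec
    have : ∀ j ∈ Finset.range (i+1),
        (-1 : ℤ) ^ (i - j) * ((d + 1).choose (i - j) : ℤ) * (ehr P j : ℤ)
        = (-1 : ℤ) ^ (i - j) * ((d + 1).choose (i - j) : ℤ) * ((j + d - 0).choose d : ℤ)
        + (-1 : ℤ) ^ (i - j) * ((d + 1).choose (i - j) : ℤ) * ((j + d - k1).choose d : ℤ)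
        + (-1 : ℤ) ^ (i - j) * ((d + 1).choose (i - j) : ℤ) * ((j + d - k2).choose d : ℤ) := by
      intro j _
      rw [h_ehr j, Nat.sub_zero]
      ring
    rw [Finset.sum_congr rfl this, Finset.sum_add_distrib, Finset.sum_add_distrib,
      key d 0 i hd, key d k1 i hd, key d k2 i hd]
  have : ∀ i ∈ Finset.range (d+1), Polynomial.C (deltaVec P d i) * Polynomial.X ^ i
      = Polynomial.C (if i = 0 then (1:ℤ) else 0) * Polynomial.X ^ i
      + Polynomial.C (if i = k1 then (1:ℤ) else 0) * Polynomial.X ^ i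
      + Polynomial.C (if i = k2 then (1:ℤ) else 0) * Polynomial.X ^ i := by
    intro i _
    rw [hdelta i]
    simp only [map_add]
    ring
  rw [Finset.sum_congr rfl this, Finset.sum_add_distrib, Finset.sum_add_distrib,
    single_term d 0 (by omega), single_term d k1 hk1d, single_term d k2 hk2d, pow_zero]

end Aux2

theorem stmt11 (d : ℕ) (hd : 1 ≤ d) (k : Fin d) (a : Fin d → ℤ)
    (ha : ∀ ℓ : Fin d, ℓ < k → a ℓ = 0 ∨ a ℓ = 1 ∨ a ℓ = 2)
    (A : Matrix (Fin d) (Fin d) ℤ)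
    (hA : A = Matrix.of fun i j =>
      if i = k then (if j = k then (3 : ℤ) else if j < k then a j else 0)
      else if i = j then 1 else 0)
    (d1 d2 : ℕ)
    (hd1 : d1 = (Finset.univ.filter fun ℓ : Fin d => ℓ < k ∧ a ℓ = 1).card)
    (hd2 : d2 = (Finset.univ.filter fun ℓ : Fin d => ℓ < k ∧ a ℓ = 2).card)
    (P : Set (Fin d → ℝ))
    (hP : P = convexHull ℝ
      (insert (0 : Fin d → ℝ) (Set.range fun i j => (A i j : ℝ)))) :
    ∑ i ∈ Finset.range (d + 1), Polynomial.C (deltaVec P d i) * Polynomial.X ^ i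
    = 1 + (Polynomial.X : Polynomial ℤ) ^
        ((1 - Int.fdiv (1 - (d1 : ℤ) - 2 * (d2 : ℤ)) 3).toNat)
        + (Polynomial.X : Polynomial ℤ) ^
        ((1 - Int.fdiv (2 - 2 * (d1 : ℤ) - (d2 : ℤ)) 3).toNat) := by
  classical
  set c : Fin d → ℤ := (fun j => if j < k then a j else 0) with hc
  have hc0 : ∀ j : Fin d, j ≠ k → c j = 0 ∨ c j = 1 ∨ c j = 2 := by
    intro j hj
    by_cases h : j < k
    · rcases ha j h with h1 | h1 | h1
      · left; rw [hc]; simp only [if_pos h]; exact h1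
      · right; left; rw [hc]; simp only [if_pos h]; exact h1
      · right; right; rw [hc]; simp only [if_pos h]; exact h1
    · left; rw [hc]; simp only [if_neg h]
  have hd1' : d1 = ((Finset.univ.erase k).filter fun j => c j = 1).card := by
    rw [hd1]; congr 1
    ext j
    simp only [Finset.mem_filter, Finset.mem_univ, true_and, Finset.mem_erase, and_true]
    constructor
    · rintro ⟨h1, h2⟩
      refine ⟨h1.ne, ?_⟩
      rw [hc]; simp only [if_pos h1]; exact h2
    · rintro ⟨hne, h2⟩
      by_cases h : j < k
      · refine ⟨h, ?_⟩
        rw [hc] at h2; simp only [if_pos h] at h2; exact h2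
      · rw [hc] at h2; simp only [if_neg h] at h2; norm_num at h2
  have hd2' : d2 = ((Finset.univ.erase k).filter fun j => c j = 2).card := by
    rw [hd2]; congr 1
    ext j
    simp only [Finset.mem_filter, Finset.mem_univ, true_and, Finset.mem_erase, and_true]
    constructor
    · rintro ⟨h1, h2⟩
      refine ⟨h1.ne, ?_⟩
      rw [hc]; simp only [if_pos h1]; exact h2
    · rintro ⟨hne, h2⟩
      by_cases h : j < k
      · refine ⟨h, ?_⟩
        rw [hc] at h2; simp only [if_pos h] at h2; exact h2
      · rw [hc] at h2; simp only [if_neg h] at h2; norm_num at h2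
  have hbound : d1 + d2 ≤ d - 1 := by
    have hdisj2 : Disjoint ((Finset.univ.erase k).filter (fun j => c j = 1))
        ((Finset.univ.erase k).filter (fun j => c j = 2)) := by
      rw [Finset.disjoint_filter]
      intro j _ hh1 hh2
      rw [hh1] at hh2; norm_num at hh2
    have h1 : d1 + d2 = (((Finset.univ.erase k).filter (fun j => c j = 1))
        ∪ ((Finset.univ.erase k).filter (fun j => c j = 2))).card := by
      rw [Finset.card_union_of_disjoint hdisj2, hd1', hd2']
    have h2 : (((Finset.univ.erase k).filter (fun j => c j = 1))
        ∪ ((Finset.univ.erase k).filter (fun j => c j = 2))).card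
        ≤ (Finset.univ.erase k).card := by
      apply Finset.card_le_card
      intro j hj
      rw [Finset.mem_union] at hj
      rcases hj with hj | hj
      · exact (Finset.mem_filter.mp hj).1
      · exact (Finset.mem_filter.mp hj).1
    have h3 : (Finset.univ.erase k).card = d - 1 := by
      rw [Finset.card_erase_of_mem (Finset.mem_univ k), Finset.card_univ, Fintype.card_fin]
    omega
  set K1 : ℕ := (1 - Int.fdiv (1 - (d1 : ℤ) - 2 * (d2 : ℤ)) 3).toNat with hK1def
  set K2 : ℕ := (1 - Int.fdiv (2 - 2 * (d1 : ℤ) - (d2 : ℤ)) 3).toNat with hK2def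
  have hK1 : (K1 : ℤ) = 1 - (1 - (d1:ℤ) - 2*(d2:ℤ))/3 := by
    rw [hK1def, Int.fdiv_eq_ediv_of_nonneg _ (by norm_num), Int.toNat_of_nonneg (by omega)]
  have hK2 : (K2 : ℤ) = 1 - (2 - 2*(d1:ℤ) - (d2:ℤ))/3 := by
    rw [hK2def, Int.fdiv_eq_ediv_of_nonneg _ (by norm_num), Int.toNat_of_nonneg (by omega)]
  have hK1b : 1 ≤ K1 ∧ K1 ≤ d := by omega
  have hK2b : 1 ≤ K2 ∧ K2 ≤ d := by omega
  have h_ehr : ∀ n : ℕ, (ehr P n : ℤ) = ((n + d).choose d : ℤ)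
      + ((n + d - K1).choose d : ℤ) + ((n + d - K2).choose d : ℤ) := by
    intro n
    have hsetEq : {x : Fin d → ℤ | (fun i => (x i : ℝ)) ∈ (n : ℝ) • P}
        = {x : Fin d → ℤ | 0 ≤ x k ∧ (∀ j, j ≠ k → c j * x k ≤ 3 * x j) ∧
          3 * (∑ j ∈ Finset.univ.erase k, x j)
            + (1 - ∑ j ∈ Finset.univ.erase k, c j) * x k ≤ 3 * (n:ℤ)} := by
      ext x
      exact mem_char k a A hA P hP c hc n x
    have hnat : ehr P n = (n + d).choose d + (n + d - K1).choose d + (n + d - K2).choose d := by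
      unfold ehr
      rw [hsetEq]
      exact count_main d hd k c hc0 d1 d2 hd1' hd2' K1 K2 hK1 hK2 n
    rw [hnat]
    push_cast
    ring
  exact poly_assembly d hd P K1 K2 hK1b.1 hK1b.2 hK2b.1 hK2b.2 h_ehr
end

section
/- Let $d \geq 1$ and $1 \leq i \leq j \leq d$. The system $i = 1 - \lfloor(1-d_1-2d_2)/3\rfloor$, $j = 1 - \lfloor(2-2d_1-d_2)/3\rfloor$ has an integer solution $(d_1,d_2)$ with $d_1, d_2 \geq 0$ and $d_1+d_2 \leq d-1$ if and only if at least one of the following holds: (a) $2j \geq i$, $2i \geq j+1$, $i+j \leq d$ (solution $d_1 = 2j-i$, $d_2 = 2i-j-1$); (b) $2j \geq i+1$, $2i \geq j+1$, $i+j \leq d+1$ (solution $d_1 = 2j-i-1$, $d_2 = 2i-j-1$); (c) $2j \geq i$, $2i \geq j+2$, $i+j \leq d+1$ (solution $d_1 = 2j-i$, $d_2 = 2i-j-2$). -/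
theorem stmt12 (d i j : ℤ) (hd : 1 ≤ d) (hi : 1 ≤ i) (hij : i ≤ j) (hjd : j ≤ d) :
    ((∃ d1 d2 : ℤ, 0 ≤ d1 ∧ 0 ≤ d2 ∧ d1 + d2 ≤ d - 1 ∧
        i = 1 - Int.fdiv (1 - d1 - 2 * d2) 3 ∧
        j = 1 - Int.fdiv (2 - 2 * d1 - d2) 3) ↔
      ((2 * j ≥ i ∧ 2 * i ≥ j + 1 ∧ i + j ≤ d) ∨
       (2 * j ≥ i + 1 ∧ 2 * i ≥ j + 1 ∧ i + j ≤ d + 1) ∨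
       (2 * j ≥ i ∧ 2 * i ≥ j + 2 ∧ i + j ≤ d + 1))) ∧
    ((2 * j ≥ i ∧ 2 * i ≥ j + 1 ∧ i + j ≤ d) →
      (0 ≤ 2 * j - i ∧ 0 ≤ 2 * i - j - 1 ∧ (2 * j - i) + (2 * i - j - 1) ≤ d - 1 ∧
       i = 1 - Int.fdiv (1 - (2 * j - i) - 2 * (2 * i - j - 1)) 3 ∧
       j = 1 - Int.fdiv (2 - 2 * (2 * j - i) - (2 * i - j - 1)) 3)) ∧
    ((2 * j ≥ i + 1 ∧ 2 * i ≥ j + 1 ∧ i + j ≤ d + 1) →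
      (0 ≤ 2 * j - i - 1 ∧ 0 ≤ 2 * i - j - 1 ∧
       (2 * j - i - 1) + (2 * i - j - 1) ≤ d - 1 ∧
       i = 1 - Int.fdiv (1 - (2 * j - i - 1) - 2 * (2 * i - j - 1)) 3 ∧
       j = 1 - Int.fdiv (2 - 2 * (2 * j - i - 1) - (2 * i - j - 1)) 3)) ∧
    ((2 * j ≥ i ∧ 2 * i ≥ j + 2 ∧ i + j ≤ d + 1) →
      (0 ≤ 2 * j - i ∧ 0 ≤ 2 * i - j - 2 ∧ (2 * j - i) + (2 * i - j - 2) ≤ d - 1 ∧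
       i = 1 - Int.fdiv (1 - (2 * j - i) - 2 * (2 * i - j - 2)) 3 ∧
       j = 1 - Int.fdiv (2 - 2 * (2 * j - i) - (2 * i - j - 2)) 3)) := by
  simp only [Int.fdiv_eq_ediv_of_nonneg _ (by norm_num : (0:ℤ) ≤ 3)]
  refine ⟨⟨?_, ?_⟩, by omega, by omega, by omega⟩
  · rintro ⟨d1, d2, h1, h2, h3, h4, h5⟩; omega
  · rintro (h | h | h)
    · exact ⟨2*j-i, 2*i-j-1, by omega⟩
    · exact ⟨2*j-i-1, 2*i-j-1, by omega⟩
    · exact ⟨2*j-i, 2*i-j-2, by omega⟩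
end
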